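/- For α ≥ 0, μ, ρ_t, E, ρ̄ > 0, h > 0, and β ∈ ℤ, both roots of the quadratic λ² - [α + (4μ/(ρ_t h²))·sin²(πβh)]·λ + α·(4μ/(ρ_t h²))·sin²(πβh) + (E√ρ̄/(ρ_t h²))·sin²(2πβh) = 0 have non-negative real part; hence the semi-discrete finite-difference scheme is linearly stable for all mesh sizes h > 0. -/

import Mathlib

open Real

/-- Off the real axis the roots of `z² - b z + c` are conjugate with real part `b / 2`;
on it, a negative root is impossible since every term of `x² - b x + c` is then non-negative
and `x² > 0`. -/
theorem Complex.re_nonneg_of_sq_sub_mul_add_eq_zero {b c : ℝ} (hb : 0 ≤ b) (hc : 0 ≤ c)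
    {z : ℂ} (hz : z ^ 2 - (b : ℂ) * z + (c : ℂ) = 0) : 0 ≤ z.re := by
  have hre : z.re ^ 2 - z.im ^ 2 - b * z.re + c = 0 := by
    simpa [pow_two, Complex.mul_re] using congrArg Complex.re hz
  have him : z.im * (2 * z.re - b) = 0 := by
    have := congrArg Complex.im hz
    simp only [pow_two, Complex.sub_im, Complex.add_im, Complex.mul_im, Complex.ofReal_re,
      Complex.ofReal_im, Complex.zero_im] at this
    linarith
  rcases mul_eq_zero.mp him with hreal | hhalf
  · by_contra! hneg
    rw [hreal] at hre
    nlinarith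
  · linarith

theorem stmt_6_general (α μ ρt E ρbar h : ℝ) (β : ℤ)
    (hα : 0 ≤ α) (hμ : 0 < μ) (hρt : 0 < ρt) (hE : 0 < E) :
    ∀ lam : ℂ,
      lam ^ 2
          - ((α + 4 * μ / (ρt * h ^ 2) * Real.sin (π * β * h) ^ 2 : ℝ) : ℂ) * lam
          + ((α * (4 * μ / (ρt * h ^ 2)) * Real.sin (π * β * h) ^ 2
              + E * Real.sqrt ρbar / (ρt * h ^ 2) * Real.sin (2 * π * β * h) ^ 2 : ℝ) : ℂ)
        = 0 → 0 ≤ lam.re := by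
  intro lam hlam
  have hsqrt := Real.sqrt_nonneg ρbar
  exact Complex.re_nonneg_of_sq_sub_mul_add_eq_zero (by positivity) (by positivity) hlam

/-- Von Neumann stability of the semi-discrete finite-difference scheme: for α ≥ 0,
positive parameters, any mesh h > 0 and discrete Fourier mode β, both roots of the
discrete characteristic quadratic have non-negative real part. -/
theorem stmt_6 (α μ ρt E ρbar h : ℝ) (β : ℤ)
    (hα : 0 ≤ α) (hμ : 0 < μ) (hρt : 0 < ρt) (hE : 0 < E) (hρ : 0 < ρbar)
    (hh : 0 < h) :
    ∀ lam : ℂ,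
      lam ^ 2
          - ((α + 4 * μ / (ρt * h ^ 2) * Real.sin (π * β * h) ^ 2 : ℝ) : ℂ) * lam
          + ((α * (4 * μ / (ρt * h ^ 2)) * Real.sin (π * β * h) ^ 2
              + E * Real.sqrt ρbar / (ρt * h ^ 2) * Real.sin (2 * π * β * h) ^ 2 : ℝ) : ℂ)
        = 0 → 0 ≤ lam.re :=
  stmt_6_general α μ ρt E ρbar h β hα hμ hρt hE
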